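/- A vector field X on M takes values in a distribution D ⊆ TM (smooth, of locally constant rank) if and only if its vertical lift X^V is tangent to D regarded as a submanifold of TM. -/

import Mathlib

/-!
If `X` takes values in `D`, the vertical line `t ↦ p + t X(x)` is a curve in `D` through `p`
whose velocity is `X^V(p)` by definition. Conversely, let `c` be a curve in `D` through the zero
vector `0ₓ` with velocity `X^V(0ₓ)`. In a local trivialization, the fibre part `w t` of `c t` lies
in the span of the trivialized frame `ζ t` of `D`, vanishes at `t = 0` and has derivative `X(x)`;
so the difference quotients `w t / t` lie in the span of `ζ t` and tend to `X(x)`. Since `ζ 0` is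
linearly independent, coefficients with respect to `ζ t` depend continuously on `t` near `0`
(they are obtained by inverting a matrix close to the identity), hence the limit `X(x)` lies in
the span of `ζ 0`, which is `Dₓ`.
-/

open Bundle
open scoped Manifold Matrix
open Filter Topology Set Submodule

noncomputable section

variable {E : Type*} [NormedAddCommGroup E] [NormedSpace ℝ E]
  {H : Type*} [TopologicalSpace H] {I : ModelWithCorners ℝ E H}
  {M : Type*} [TopologicalSpace M] [ChartedSpace H M] [IsManifold I (⊤ : ℕ∞) M]

/-- The vertical lift `X^V(p) = d/dt|₀ (p + t X(x))` of a vector field `X`, as a vector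
field on `TM`. -/
def vertLift (X : (x : M) → TangentSpace I x) :
    (p : TangentBundle I M) → TangentSpace I.tangent p := fun p =>
  mfderiv 𝓘(ℝ) I.tangent
    (fun t : ℝ => (⟨p.proj, p.2 + t • X p.proj⟩ : TangentBundle I M)) 0 (1 : ℝ)

theorem eq_sum_inv_mulVec_smul_of_mem_span {R M ι : Type*} [CommRing R] [AddCommGroup M]
    [Module R M] [Fintype ι] [DecidableEq ι] (f : ι → Module.Dual R M) {z : ι → M} {y : M}
    (hz : IsUnit (Matrix.of fun i j => f i (z j)).det) (hy : y ∈ span R (range z)) :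
    y = ∑ j, ((Matrix.of fun i j => f i (z j))⁻¹ *ᵥ fun i => f i y) j • z j := by
  obtain ⟨c, rfl⟩ := (mem_span_range_iff_exists_fun R).mp hy
  have hfc : (fun i => f i (∑ j, c j • z j)) = (Matrix.of fun i j => f i (z j)) *ᵥ c := by
    ext i
    simp [Matrix.mulVec, dotProduct, mul_comm]
  rw [hfc, Matrix.mulVec_mulVec, Matrix.nonsing_inv_mul _ hz, Matrix.one_mulVec]

section SpanLimit

variable {𝕜 : Type*} [RCLike 𝕜] {F : Type*} [NormedAddCommGroup F] [NormedSpace 𝕜 F]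
  {ι : Type*} [Fintype ι]

theorem LinearIndependent.exists_dual_family [DecidableEq ι] {v : ι → F}
    (hv : LinearIndependent 𝕜 v) :
    ∃ f : ι → StrongDual 𝕜 F, ∀ i j, f i (v j) = (1 : Matrix ι ι 𝕜) i j := by
  have := FiniteDimensional.span_of_finite 𝕜 (finite_range v)
  let b := Module.Basis.span hv
  have hfin (i : ι) : ∃ g : StrongDual 𝕜 F,
      LinearMap.toContinuousLinearMap (b.coord i) = g.comp (span 𝕜 (range v)).subtypeL :=
    ContinuousLinearMap.exist_extension_of_finiteDimensional_range _
  choose f hf using hfin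
  refine ⟨f, fun i j => ?_⟩
  simpa [Matrix.one_apply, Finsupp.single_apply, eq_comm, b, Module.Basis.coe_span_apply]
    using congr($(hf i) (b j)).symm

theorem mem_span_of_tendsto {α : Type*} {l : Filter α} [l.NeBot] {ζ : α → ι → F} {ζ₀ : ι → F}
    (hζ : Tendsto ζ l (𝓝 ζ₀)) (hind : LinearIndependent 𝕜 ζ₀) {v : α → F} {v₀ : F}
    (hv : Tendsto v l (𝓝 v₀)) (hmem : ∀ᶠ a in l, v a ∈ span 𝕜 (range (ζ a))) :
    v₀ ∈ span 𝕜 (range ζ₀) := by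
  classical
  -- With `f` dual to `ζ₀`, the matrix `A z = (f i (z j))` is invertible for `z` near `ζ₀`, and
  -- then the coefficients of `y ∈ span (range z)` are `(A z)⁻¹ *ᵥ (f i y)`, continuous in `(z, y)`.
  obtain ⟨f, hf⟩ := hind.exists_dual_family
  let g (i : ι) : Module.Dual 𝕜 F := f i
  let A : (ι → F) → Matrix ι ι 𝕜 := fun z => Matrix.of fun i j => g i (z j)
  let coeff : (ι → F) × F → ι → 𝕜 := fun p => (A p.1)⁻¹ *ᵥ fun i => g i p.2
  have hA : Continuous A :=
    continuous_matrix fun i j => (f i).continuous.comp (continuous_apply j)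
  have hA₀ : A ζ₀ = 1 := Matrix.ext hf
  have hcoeff : ContinuousAt coeff (ζ₀, v₀) := by
    have hinv : ContinuousAt (fun p : (ι → F) × F => (A p.1)⁻¹) (ζ₀, v₀) := by
      refine ContinuousAt.comp (g := Inv.inv) ?_ (hA.comp continuous_fst).continuousAt
      refine continuousAt_matrix_inv _ ?_
      simp only [hA₀, Matrix.det_one, Ring.inverse_eq_inv']
      exact continuousAt_inv₀ one_ne_zero
    have hmul : Continuous fun q : Matrix ι ι 𝕜 × (ι → 𝕜) => q.1 *ᵥ q.2 :=
      continuous_fst.matrix_mulVec continuous_snd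
    have hfv : Continuous fun p : (ι → F) × F => fun i => g i p.2 :=
      continuous_pi fun i => (f i).continuous.comp continuous_snd
    exact ContinuousAt.comp (x := (ζ₀, v₀)) (g := fun q : Matrix ι ι 𝕜 × (ι → 𝕜) => q.1 *ᵥ q.2)
      (f := fun p : (ι → F) × F => ((A p.1)⁻¹, fun i => g i p.2))
      hmul.continuousAt (hinv.prodMk hfv.continuousAt)
  have hunit : ∀ᶠ a in l, IsUnit (A (ζ a)).det := by
    have hdet : Tendsto (fun a => (A (ζ a)).det) l (𝓝 1) := by
      simpa [hA₀, Function.comp_def] using (hA.matrix_det.tendsto ζ₀).comp hζ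
    filter_upwards [hdet.eventually_ne one_ne_zero] with a ha using ha.isUnit
  have hlim : Tendsto (fun a => ∑ j, coeff (ζ a, v a) j • ζ a j) l
      (𝓝 (∑ j, coeff (ζ₀, v₀) j • ζ₀ j)) := by
    have hc := tendsto_pi_nhds.mp (hcoeff.tendsto.comp (hζ.prodMk_nhds hv))
    exact tendsto_finsetSum _ fun j _ => (hc j).smul (tendsto_pi_nhds.mp hζ j)
  rw [tendsto_nhds_unique (hv.congr' ?_) hlim]
  · exact sum_mem fun j _ => smul_mem _ _ (subset_span (mem_range_self j))
  · filter_upwards [hmem, hunit] with a ha hu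
    exact eq_sum_inv_mulVec_smul_of_mem_span g hu ha

theorem HasDerivAt.mem_span_of_eventually_mem_span {ζ : 𝕜 → ι → F} {t₀ : 𝕜}
    (hζ : ContinuousAt ζ t₀) (hind : LinearIndependent 𝕜 (ζ t₀)) {w : 𝕜 → F} {w' : F}
    (hw : HasDerivAt w w' t₀) (hw₀ : w t₀ = 0)
    (hmem : ∀ᶠ t in 𝓝 t₀, w t ∈ span 𝕜 (range (ζ t))) :
    w' ∈ span 𝕜 (range (ζ t₀)) := by
  refine mem_span_of_tendsto (hζ.tendsto.mono_left nhdsWithin_le_nhds) hind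
    (hasDerivAt_iff_tendsto_slope.mp hw) ?_
  filter_upwards [nhdsWithin_le_nhds hmem] with t ht
  rw [slope_def_module, hw₀, sub_zero]
  exact smul_mem _ _ ht

end SpanLimit

theorem MDifferentiableAt.hasDerivAt_extChartAt_comp {E' : Type*} [NormedAddCommGroup E']
    [NormedSpace ℝ E'] {H' : Type*} [TopologicalSpace H'] {I' : ModelWithCorners ℝ E' H'}
    {M' : Type*} [TopologicalSpace M'] [ChartedSpace H' M'] {c : ℝ → M'} {t₀ : ℝ}
    (h : MDifferentiableAt 𝓘(ℝ) I' c t₀) :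
    HasDerivAt (extChartAt I' (c t₀) ∘ c) (show E' from mfderiv 𝓘(ℝ) I' c t₀ 1) t₀ := by
  have hd := h.differentiableWithinAt_writtenInExtChartAt
  simp only [writtenInExtChartAt, extChartAt_model_space_eq_id, PartialEquiv.refl_symm,
    PartialEquiv.refl_coe, Function.comp_id, modelWithCornersSelf_coe, range_id, id,
    differentiableWithinAt_univ] at hd
  simp only [mfderiv, h, ↓reduceIte, writtenInExtChartAt, extChartAt_model_space_eq_id,
    PartialEquiv.refl_symm, PartialEquiv.refl_coe, Function.comp_id, modelWithCornersSelf_coe,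
    range_id, id, fderivWithin_univ]
  exact hd.hasFDerivAt.hasDerivAt

section VectorBundle

variable {EB : Type*} [NormedAddCommGroup EB] [NormedSpace ℝ EB]
  {HB : Type*} [TopologicalSpace HB] {IB : ModelWithCorners ℝ EB HB}
  {B : Type*} [TopologicalSpace B] [ChartedSpace HB B]
  {F : Type*} [NormedAddCommGroup F] {V : B → Type*}
  [TopologicalSpace (TotalSpace F V)] [∀ x, TopologicalSpace (V x)] [FiberBundle F V]

theorem ContinuousAt.trivializationAt_snd {α : Type*} [TopologicalSpace α]
    {f : α → TotalSpace F V} {x₀ : α} {b : B} (hf : ContinuousAt f x₀) (hb : (f x₀).proj = b) :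
    ContinuousAt (fun x => (trivializationAt F V b (f x)).2) x₀ := by
  subst hb
  exact ((FiberBundle.continuousAt_totalSpace F f).1 hf).2

variable [NormedSpace ℝ F]

theorem MDifferentiableAt.hasDerivAt_trivializationAt_snd {c : ℝ → TotalSpace F V} {t₀ : ℝ}
    (h : MDifferentiableAt 𝓘(ℝ) (IB.prod 𝓘(ℝ, F)) c t₀) :
    HasDerivAt (fun t => (trivializationAt F V (c t₀).proj (c t)).2)
      (show EB × F from mfderiv 𝓘(ℝ) (IB.prod 𝓘(ℝ, F)) c t₀ 1).2 t₀ := by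
  have := hasFDerivAt_snd.comp_hasDerivAt t₀ h.hasDerivAt_extChartAt_comp
  rwa [FiberBundle.extChartAt] at this

variable [∀ x, AddCommGroup (V x)] [∀ x, Module ℝ (V x)] [VectorBundle ℝ F V]

theorem hasDerivAt_trivializationAt_mk_add_smul (x : B) (v w : V x) (t₀ : ℝ) :
    HasDerivAt (fun t : ℝ => (trivializationAt F V x ⟨x, v + t • w⟩).2)
      (trivializationAt F V x ⟨x, w⟩).2 t₀ := by
  let φ := (trivializationAt F V x).continuousLinearEquivAt ℝ x
    (mem_baseSet_trivializationAt F V x)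
  have h : HasDerivAt (fun t : ℝ => φ v + t • φ w) (φ w) t₀ := by
    simpa using ((hasDerivAt_id t₀).smul_const (φ w)).const_add (φ v)
  refine h.congr_of_eventuallyEq (.of_forall fun t => ?_)
  exact (map_add φ v (t • w)).trans (congrArg _ (map_smul φ t w))

theorem mdifferentiable_mk_add_smul (x : B) (v w : V x) :
    MDifferentiable 𝓘(ℝ) (IB.prod 𝓘(ℝ, F)) (fun t : ℝ => TotalSpace.mk' F x (v + t • w)) :=
  fun t₀ => (mdifferentiableAt_totalSpace _ _).2 ⟨mdifferentiableAt_const,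
    mdifferentiableAt_iff_differentiableAt.2
      (hasDerivAt_trivializationAt_mk_add_smul x v w t₀).differentiableAt⟩

theorem mfderiv_mk_add_smul_snd (x : B) (v w : V x) (t₀ : ℝ) :
    (show EB × F from mfderiv 𝓘(ℝ) (IB.prod 𝓘(ℝ, F))
      (fun t : ℝ => TotalSpace.mk' F x (v + t • w)) t₀ 1).2 =
        (trivializationAt F V x ⟨x, w⟩).2 :=
  ((mdifferentiable_mk_add_smul x v w t₀).hasDerivAt_trivializationAt_snd).unique
    (hasDerivAt_trivializationAt_mk_add_smul x v w t₀)

theorem mem_of_mfderiv_snd_eq_of_eventually_mem {ι : Type*} [Fintype ι]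
    {D : (x : B) → Submodule ℝ (V x)} {x : B} {Z : ι → (y : B) → V y}
    (hZ : ∀ i, ContinuousAt (fun y => TotalSpace.mk' F y (Z i y)) x)
    (hZx : LinearIndependent ℝ fun i => Z i x)
    (hZD : ∀ᶠ y in 𝓝 x, D y = span ℝ (range fun i => Z i y))
    {c : ℝ → TotalSpace F V} (hcD : ∀ᶠ t in 𝓝 0, (c t).2 ∈ D (c t).proj)
    (hc₀ : c 0 = ⟨x, 0⟩) (hc : MDifferentiableAt 𝓘(ℝ) (IB.prod 𝓘(ℝ, F)) c 0) {u : V x}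
    (hu : (show EB × F from mfderiv 𝓘(ℝ) (IB.prod 𝓘(ℝ, F)) c 0 1).2 =
      (trivializationAt F V x ⟨x, u⟩).2) :
    u ∈ D x := by
  set e := trivializationAt F V x
  let φ (y : B) (hy : y ∈ e.baseSet) := e.continuousLinearEquivAt ℝ y hy
  have hx : x ∈ e.baseSet := mem_baseSet_trivializationAt F V x
  have hproj : (c 0).proj = x := by rw [hc₀]
  have hγ : ContinuousAt (fun t => (c t).proj) 0 :=
    (FiberBundle.continuous_proj F V).continuousAt.comp hc.continuousAt
  have hγx : Tendsto (fun t => (c t).proj) (𝓝 0) (𝓝 x) := hproj ▸ hγ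
  let ζ (t : ℝ) (i : ι) : F := (e ⟨(c t).proj, Z i (c t).proj⟩).2
  have hζ : ContinuousAt ζ 0 := continuousAt_pi.2 fun i =>
    ((hZ i).comp_of_eq hγ hproj).trivializationAt_snd hproj
  have hζ₀ : ζ 0 = fun i => φ x hx (Z i x) := by
    funext i
    show (e ⟨(c 0).proj, Z i (c 0).proj⟩).2 = _
    rw [hproj]
    rfl
  have hw : HasDerivAt (fun t => (e (c t)).2) (φ x hx u) 0 := by
    have := hc.hasDerivAt_trivializationAt_snd
    rwa [hproj, hu] at this
  have hw₀ : (e (c 0)).2 = 0 := by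
    rw [hc₀]
    exact map_zero (φ x hx)
  have hmem : ∀ᶠ t in 𝓝 0, (e (c t)).2 ∈ span ℝ (range (ζ t)) := by
    filter_upwards [hcD, hγx.eventually hZD, hγx.eventually (e.open_baseSet.mem_nhds hx)]
      with t hct hDt hbt
    rw [hDt] at hct
    have := apply_mem_span_image_of_mem_span (φ _ hbt).toLinearMap hct
    rwa [← range_comp] at this
  have hmem₀ := hw.mem_span_of_eventually_mem_span hζ (hζ₀ ▸ hZx.map' _ (φ x hx).ker) hw₀ hmem
  rw [hζ₀] at hmem₀
  rwa [hZD.self_of_nhds, ← apply_mem_span_image_iff_mem_span (φ x hx).injective,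
    ← range_comp]

end VectorBundle

theorem valued_in_distribution_iff_vlift_tangent_general
    (D : (x : M) → Submodule ℝ (TangentSpace I x))
    -- `D` is smooth of locally constant rank: around every point it is spanned by finitely
    -- many smooth, pointwise linearly independent vector fields:
    (hD : ∀ x₀ : M, ∃ (n : ℕ) (Z : Fin n → (x : M) → TangentSpace I x) (U : Set M),
      U ∈ nhds x₀ ∧
      (∀ i, ContMDiff I I.tangent (⊤ : ℕ∞) (fun x => (⟨x, Z i x⟩ : TangentBundle I M))) ∧
      ∀ x ∈ U, LinearIndependent ℝ (fun i => Z i x) ∧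
        D x = Submodule.span ℝ (Set.range fun i => Z i x))
    (X : (x : M) → TangentSpace I x) :
    (∀ x : M, X x ∈ D x) ↔
      (∀ p : TangentBundle I M, p.2 ∈ D p.proj →
        -- `X^V(p)` is tangent at `p` to the submanifold `D ⊆ TM`:
        ∃ c : ℝ → TangentBundle I M,
          (∀ t, (c t).2 ∈ D (c t).proj) ∧ c 0 = p ∧
          MDifferentiableAt 𝓘(ℝ) I.tangent c 0 ∧
          (show E × E from mfderiv 𝓘(ℝ) I.tangent c 0 (1 : ℝ)) =
            show E × E from vertLift X p) := by
  constructor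
  · intro hXD p hp
    refine ⟨fun t => ⟨p.proj, p.2 + t • X p.proj⟩, fun t => ?_, by simp,
      mdifferentiable_mk_add_smul _ _ _ 0, rfl⟩
    exact (D p.proj).add_mem hp ((D p.proj).smul_mem t (hXD p.proj))
  · intro hT x
    obtain ⟨n, Z, U, hU, hZ, hZD⟩ := hD x
    obtain ⟨c, hcD, hc₀, hc, hvel⟩ := hT ⟨x, 0⟩ (zero_mem _)
    refine mem_of_mfderiv_snd_eq_of_eventually_mem (fun i => (hZ i).continuous.continuousAt)
      (hZD x (mem_of_mem_nhds hU)).1 (eventually_of_mem hU fun y hy => (hZD y hy).2)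
      (.of_forall hcD) hc₀ hc
      ((congrArg Prod.snd hvel).trans (mfderiv_mk_add_smul_snd x 0 (X x) 0))

/-- a vector field `X` on `M` takes values in a smooth locally constant rank
distribution `D ⊆ TM` if and only if its vertical lift `X^V` is tangent to `D`, regarded as
a submanifold of `TM` (tangency expressed through curves lying in `D`). -/
theorem valued_in_distribution_iff_vlift_tangent
    (D : (x : M) → Submodule ℝ (TangentSpace I x))
    -- `D` is smooth of locally constant rank: around every point it is spanned by finitely
    -- many smooth, pointwise linearly independent vector fields:
    (hD : ∀ x₀ : M, ∃ (n : ℕ) (Z : Fin n → (x : M) → TangentSpace I x) (U : Set M),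
      U ∈ nhds x₀ ∧
      (∀ i, ContMDiff I I.tangent (⊤ : ℕ∞) (fun x => (⟨x, Z i x⟩ : TangentBundle I M))) ∧
      ∀ x ∈ U, LinearIndependent ℝ (fun i => Z i x) ∧
        D x = Submodule.span ℝ (Set.range fun i => Z i x))
    (X : (x : M) → TangentSpace I x)
    (hX : ContMDiff I I.tangent (⊤ : ℕ∞) (fun x => (⟨x, X x⟩ : TangentBundle I M))) :
    (∀ x : M, X x ∈ D x) ↔
      (∀ p : TangentBundle I M, p.2 ∈ D p.proj →
        -- `X^V(p)` is tangent at `p` to the submanifold `D ⊆ TM`: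
        ∃ c : ℝ → TangentBundle I M,
          (∀ t, (c t).2 ∈ D (c t).proj) ∧ c 0 = p ∧
          MDifferentiableAt 𝓘(ℝ) I.tangent c 0 ∧
          (show E × E from mfderiv 𝓘(ℝ) I.tangent c 0 (1 : ℝ)) =
            show E × E from vertLift X p) :=
  valued_in_distribution_iff_vlift_tangent_general D hD X
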